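/- arXiv:2405.18604 — 3 statements merged into one kernel-verified Lean document; each statement's English description precedes it below -/
import Mathlib

section
/- Let c ∈ ℝ \ {0}, ρ(r) = -1/(r - i c), ρ̄(r) = conj(ρ(r)), and consider twice continuously differentiable x : (0,∞) → ℂ. Then x satisfies the ODE ρ² d/dr [ (ρ̄/ρ³) d/dr ( (ρ/ρ̄) x ) ] = 0 on (0,∞) if and only if there exist constants A, B, C ∈ ℂ such that x(r) = A ρ(r)/ρ̄(r) + B ρ̄(r)/ρ(r) + C (ρ(r) + ρ̄(r)). Moreover, if additionally x(r) = O(r^{-2}) as r → ∞, then x ≡ 0. -/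
open Complex Filter Asymptotics

/-- Kerr optical scalar ρ(r) = -1/(r - i c). -/
noncomputable def rhoK (c : ℝ) (r : ℝ) : ℂ := -1 / ((r : ℂ) - c * Complex.I)

/-- Complex conjugate ρ̄. -/
noncomputable def rhoKbar (c : ℝ) (r : ℝ) : ℂ := (starRingEnd ℂ) (rhoK c r)

/-!
With u = ρ/ρ̄ and q = ρ̄/ρ³ the equation reads (q (u x)')' = 0. Since ρ' = ρ² and ρ̄' = ρ̄², the
function g = ρ(ρ + ρ̄)/(2ρ̄) satisfies q g' = 1, so the equation integrates to u x = B + C g, that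
is x = B ρ̄/ρ + (C/2)(ρ + ρ̄). The term ρ/ρ̄ of the three-parameter family is redundant, because
ρ - ρ̄ = -2ic ρρ̄ gives ρ/ρ̄ = ρ̄/ρ - 2ic(ρ + ρ̄). As r → ∞ we have rρ → -1 and rρ̄ → -1, so a
solution x = B ρ̄/ρ + C(ρ + ρ̄) has x → B and r x → -2C; decay O(r⁻²) forces B = C = 0.
-/

theorem IsOpen.deriv_mul_deriv_eq_zero_iff {𝕜 𝕜' : Type*} [RCLike 𝕜] [NormedField 𝕜']
    [NormedAlgebra 𝕜 𝕜'] {s : Set 𝕜} (hs : IsOpen s) (hs' : IsPreconnected s) {q g y : 𝕜 → 𝕜'}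
    (hq : ∀ r ∈ s, q r ≠ 0) (hg : ∀ r ∈ s, HasDerivAt g (q r)⁻¹ r)
    (hy : DifferentiableOn 𝕜 y s) (hqy : DifferentiableOn 𝕜 (fun r => q r * deriv y r) s) :
    (∀ r ∈ s, deriv (fun r => q r * deriv y r) r = 0) ↔ ∃ B C, ∀ r ∈ s, y r = B + C * g r := by
  constructor
  · intro h
    obtain ⟨K, hK⟩ := hs.exists_is_const_of_deriv_eq_zero hs' hqy h
    have hKg : ∀ r ∈ s, HasDerivAt (fun r => K * g r) (K * (q r)⁻¹) r :=
      fun r hr => (hg r hr).const_mul K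
    obtain ⟨B, hB⟩ := hs.exists_eq_add_of_deriv_eq hs' hy
      (fun r hr => (hKg r hr).differentiableAt.differentiableWithinAt)
      (fun r hr => by rw [(hKg r hr).deriv, ← hK r hr]; field_simp [hq r hr])
    exact ⟨B, K, fun r hr => by rw [hB hr, add_comm]⟩
  · rintro ⟨B, C, hBC⟩ r hr
    have hderiv : ∀ t ∈ s, q t * deriv y t = C := fun t ht => by
      have hyt : y =ᶠ[nhds t] fun r => B + C * g r :=
        Filter.eventuallyEq_of_mem (hs.mem_nhds ht) hBC
      rw [hyt.deriv_eq, ((hg t ht).const_mul C).const_add B |>.deriv,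
        mul_left_comm, mul_inv_cancel₀ (hq t ht), mul_one]
    rw [(Filter.eventuallyEq_of_mem (hs.mem_nhds hr) hderiv).deriv_eq, deriv_const]

lemma tendsto_ofReal_inv_atTop : Tendsto (fun r : ℝ => (r : ℂ)⁻¹) atTop (nhds 0) := by
  simpa [Function.comp_def] using (continuous_ofReal.tendsto 0).comp tendsto_inv_atTop_zero

lemma tendsto_ofReal_mul_of_isBigO_inv_sq {f : ℝ → ℂ} (h : f =O[atTop] fun r => (r ^ 2)⁻¹) :
    Tendsto (fun r : ℝ => (r : ℂ) * f r) atTop (nhds 0) := by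
  have hr : (fun r : ℝ => (r : ℂ)) =O[atTop] fun r => r :=
    isBigO_of_le _ fun r => by simp
  refine (hr.mul h).trans_tendsto (tendsto_inv_atTop_zero.congr' ?_)
  filter_upwards [eventually_ne_atTop 0] with r hr
  field_simp

namespace KerrTransport

variable {c r : ℝ}

lemma ofReal_sub_mul_I_ne_zero (hr : r ≠ 0) : (r : ℂ) - c * I ≠ 0 := by
  intro h
  exact hr (by simpa using congrArg Complex.re h)

lemma rhoKbar_eq_rhoK_neg (c : ℝ) : rhoKbar c = rhoK (-c) := by
  ext r
  simp [rhoKbar, rhoK, map_div₀, sub_eq_add_neg]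

lemma rhoK_ne_zero (hr : r ≠ 0) : rhoK c r ≠ 0 :=
  div_ne_zero (neg_ne_zero.2 one_ne_zero) (ofReal_sub_mul_I_ne_zero hr)

lemma rhoKbar_ne_zero (hr : r ≠ 0) : rhoKbar c r ≠ 0 := by
  rw [rhoKbar_eq_rhoK_neg]
  exact rhoK_ne_zero hr

lemma hasDerivAt_rhoK (hr : r ≠ 0) : HasDerivAt (rhoK c) (rhoK c r ^ 2) r := by
  have h := (hasDerivAt_const r (-1 : ℂ)).fun_div
    ((hasDerivAt_id r).ofReal_comp.sub_const (c * I)) (ofReal_sub_mul_I_ne_zero hr)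
  refine h.congr_deriv ?_
  simp [rhoK, div_pow]

lemma contDiffAt_rhoK {n : WithTop ℕ∞} (hr : r ≠ 0) : ContDiffAt ℝ n (rhoK c) r := by
  have h : ContDiffAt ℝ n (fun s : ℝ => (s : ℂ) - c * I) r :=
    (ofRealCLM.contDiff.sub contDiff_const).contDiffAt
  show ContDiffAt ℝ n (fun s : ℝ => -1 / ((s : ℂ) - c * I)) r
  simp only [div_eq_mul_inv]
  exact contDiffAt_const.mul (h.inv (ofReal_sub_mul_I_ne_zero hr))

lemma contDiffAt_rhoKbar {n : WithTop ℕ∞} (hr : r ≠ 0) : ContDiffAt ℝ n (rhoKbar c) r := by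
  rw [rhoKbar_eq_rhoK_neg]
  exact contDiffAt_rhoK hr

lemma rhoK_sub_rhoKbar (hr : r ≠ 0) :
    rhoK c r - rhoKbar c r = -2 * c * I * (rhoK c r * rhoKbar c r) := by
  have hz := ofReal_sub_mul_I_ne_zero (c := c) hr
  have hw := ofReal_sub_mul_I_ne_zero (c := -c) hr
  rw [rhoKbar_eq_rhoK_neg]
  simp only [rhoK, ofReal_neg, neg_mul, sub_neg_eq_add] at hw ⊢
  field_simp
  ring

lemma rhoK_div_rhoKbar (hr : r ≠ 0) :
    rhoK c r / rhoKbar c r = rhoKbar c r / rhoK c r - 2 * c * I * (rhoK c r + rhoKbar c r) := by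
  have hρ := rhoK_ne_zero (c := c) hr
  have hρ' := rhoKbar_ne_zero (c := c) hr
  field_simp
  linear_combination (rhoK c r + rhoKbar c r) * rhoK_sub_rhoKbar (c := c) hr

noncomputable def particularSolution (c r : ℝ) : ℂ :=
  rhoK c r * (rhoK c r + rhoKbar c r) / (2 * rhoKbar c r)

lemma hasDerivAt_particularSolution (hr : r ≠ 0) :
    HasDerivAt (particularSolution c) ((rhoKbar c r / rhoK c r ^ 3)⁻¹) r := by
  have hρ := hasDerivAt_rhoK (c := c) hr
  have hρ' := hasDerivAt_rhoK (c := -c) hr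
  have hne := rhoK_ne_zero (c := c) hr
  have hne' := rhoK_ne_zero (c := -c) hr
  have h := (hρ.mul (hρ.add hρ')).div (hρ'.const_mul 2) (mul_ne_zero two_ne_zero hne')
  show HasDerivAt (fun s => rhoK c s * (rhoK c s + rhoKbar c s) / (2 * rhoKbar c s)) _ r
  rw [rhoKbar_eq_rhoK_neg]
  refine h.congr_deriv ?_
  simp only [Pi.add_apply, Pi.mul_apply]
  field_simp
  ring

lemma rhoK_div_rhoKbar_mul_eq_iff (hr : r ≠ 0) {x B C : ℂ} :
    rhoK c r / rhoKbar c r * x = B + C * particularSolution c r ↔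
      x = B * (rhoKbar c r / rhoK c r) + C / 2 * (rhoK c r + rhoKbar c r) := by
  have hρ := rhoK_ne_zero (c := c) hr
  have hρ' := rhoKbar_ne_zero (c := c) hr
  unfold particularSolution
  constructor <;> intro h <;> field_simp at h ⊢ <;> linear_combination h

lemma tendsto_ofReal_mul_rhoK_atTop (c : ℝ) :
    Tendsto (fun r : ℝ => (r : ℂ) * rhoK c r) atTop (nhds (-1)) := by
  have h := ((tendsto_const_nhds (x := (1 : ℂ))).sub
    (tendsto_ofReal_inv_atTop.const_mul (c * I))).inv₀ (by simp)
  refine (h.neg.congr' ?_).trans (by simp)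
  filter_upwards [eventually_ne_atTop 0] with r hr
  have hr' : (r : ℂ) ≠ 0 := ofReal_ne_zero.2 hr
  have hz := ofReal_sub_mul_I_ne_zero (c := c) hr
  simp only [rhoK]
  field_simp

lemma tendsto_ofReal_mul_rhoKbar_atTop (c : ℝ) :
    Tendsto (fun r : ℝ => (r : ℂ) * rhoKbar c r) atTop (nhds (-1)) := by
  simpa only [rhoKbar_eq_rhoK_neg] using tendsto_ofReal_mul_rhoK_atTop (-c)

lemma eq_zero_of_isBigO_inv_sq {x : ℝ → ℂ} {B C : ℂ}
    (hx : ∀ r > 0, x r = B * (rhoKbar c r / rhoK c r) + C * (rhoK c r + rhoKbar c r))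
    (hO : x =O[atTop] fun r => (r ^ 2)⁻¹) : ∀ r > 0, x r = 0 := by
  have hρ := tendsto_ofReal_mul_rhoK_atTop c
  have hρ' := tendsto_ofReal_mul_rhoKbar_atTop c
  have hrx := tendsto_ofReal_mul_of_isBigO_inv_sq hO
  have hB : B = 0 := by
    have hlim := (tendsto_const_nhds (x := B)).mul (hρ'.div hρ (by norm_num)) |>.add
      ((tendsto_const_nhds (x := C)).mul (tendsto_ofReal_inv_atTop.mul (hρ.add hρ')))
    have hx0 : Tendsto x atTop (nhds 0) := by
      simpa using (tendsto_ofReal_inv_atTop.mul hrx).congr' <|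
        (eventually_ne_atTop 0).mono fun r hr => inv_mul_cancel_left₀ (ofReal_ne_zero.2 hr) _
    have hlimB : B * (-1 / -1) + C * (0 * (-1 + -1)) = 0 :=
      tendsto_nhds_unique (hlim.congr' ?_) hx0
    · simpa using hlimB
    filter_upwards [eventually_gt_atTop 0] with r hr
    have hr' : (r : ℂ) ≠ 0 := ofReal_ne_zero.2 hr.ne'
    rw [hx r hr, Pi.div_apply, mul_div_mul_left _ _ hr', ← mul_add, inv_mul_cancel_left₀ hr']
  have hC : C = 0 := by
    have hlim := (tendsto_const_nhds (x := C)).mul (hρ.add hρ')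
    have h2C : C * (-1 + -1) = 0 := tendsto_nhds_unique (hlim.congr' ?_) hrx
    · linear_combination -h2C / 2
    filter_upwards [eventually_gt_atTop 0] with r hr
    rw [hx r hr, hB]
    ring
  intro r hr
  rw [hx r hr, hB, hC]
  ring

theorem transport_eq_zero_iff {x : ℝ → ℂ} (hx : ContDiffOn ℝ 2 x (Set.Ioi 0)) :
    (∀ r > (0 : ℝ), (rhoK c r) ^ 2 * deriv (fun s => (rhoKbar c s / (rhoK c s) ^ 3) *
        deriv (fun t => (rhoK c t / rhoKbar c t) * x t) s) r = 0) ↔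
      ∃ B C : ℂ, ∀ r > (0 : ℝ),
        x r = B * (rhoKbar c r / rhoK c r) + C * (rhoK c r + rhoKbar c r) := by
  have hρ : ∀ {n : WithTop ℕ∞}, ContDiffOn ℝ n (rhoK c) (Set.Ioi 0) :=
    fun r hr => (contDiffAt_rhoK (ne_of_gt hr)).contDiffWithinAt
  have hρ' : ∀ {n : WithTop ℕ∞}, ContDiffOn ℝ n (rhoKbar c) (Set.Ioi 0) :=
    fun r hr => (contDiffAt_rhoKbar (ne_of_gt hr)).contDiffWithinAt
  have hy : ContDiffOn ℝ 2 (fun t => rhoK c t / rhoKbar c t * x t) (Set.Ioi 0) := by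
    simpa only [div_eq_mul_inv] using
      (hρ.mul (hρ'.fun_inv fun r hr => rhoKbar_ne_zero (ne_of_gt hr))).mul hx
  have hq : ContDiffOn ℝ 1 (fun s => rhoKbar c s / rhoK c s ^ 3) (Set.Ioi 0) := by
    simpa only [div_eq_mul_inv] using
      hρ'.mul ((hρ.pow 3).fun_inv fun r hr => pow_ne_zero 3 (rhoK_ne_zero (ne_of_gt hr)))
  calc _ ↔ ∀ r ∈ Set.Ioi (0 : ℝ), deriv (fun s => (rhoKbar c s / (rhoK c s) ^ 3) *
        deriv (fun t => (rhoK c t / rhoKbar c t) * x t) s) r = 0 :=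
      forall₂_congr fun r hr => by simp [rhoK_ne_zero (ne_of_gt hr)]
    _ ↔ ∃ B C, ∀ r ∈ Set.Ioi (0 : ℝ),
        rhoK c r / rhoKbar c r * x r = B + C * particularSolution c r :=
      isOpen_Ioi.deriv_mul_deriv_eq_zero_iff isPreconnected_Ioi
        (fun r hr => div_ne_zero (rhoKbar_ne_zero (ne_of_gt hr))
          (pow_ne_zero 3 (rhoK_ne_zero (ne_of_gt hr))))
        (fun r hr => hasDerivAt_particularSolution (ne_of_gt hr))
        (hy.differentiableOn two_ne_zero)
        ((hq.mul (hy.deriv_of_isOpen isOpen_Ioi (by norm_num))).differentiableOn one_ne_zero)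
    _ ↔ _ := by
      simp only [Set.mem_Ioi]
      constructor
      · rintro ⟨B, C, h⟩
        exact ⟨B, C / 2, fun r hr => (rhoK_div_rhoKbar_mul_eq_iff (ne_of_gt hr)).1 (h r hr)⟩
      · rintro ⟨B, C, h⟩
        refine ⟨B, 2 * C, fun r hr => (rhoK_div_rhoKbar_mul_eq_iff (ne_of_gt hr)).2 ?_⟩
        rw [h r hr, mul_div_cancel_left₀ C two_ne_zero]

lemma exists_three_term_iff {x : ℝ → ℂ} :
    (∃ A B C : ℂ, ∀ r > (0 : ℝ), x r = A * (rhoK c r / rhoKbar c r) +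
        B * (rhoKbar c r / rhoK c r) + C * (rhoK c r + rhoKbar c r)) ↔
      ∃ B C : ℂ, ∀ r > (0 : ℝ),
        x r = B * (rhoKbar c r / rhoK c r) + C * (rhoK c r + rhoKbar c r) := by
  constructor
  · rintro ⟨A, B, C, h⟩
    refine ⟨A + B, C - 2 * c * I * A, fun r hr => ?_⟩
    rw [h r hr, rhoK_div_rhoKbar (ne_of_gt hr)]
    ring
  · rintro ⟨B, C, h⟩
    exact ⟨0, B, C, fun r hr => by rw [h r hr, zero_mul, zero_add]⟩

end KerrTransport

open KerrTransport in
theorem stmt2_general (c : ℝ) (x : ℝ → ℂ)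
    (hx : ContDiffOn ℝ 2 x (Set.Ioi 0)) :
    ((∀ r > (0 : ℝ),
        (rhoK c r) ^ 2 *
          deriv (fun s =>
            (rhoKbar c s / (rhoK c s) ^ 3) *
              deriv (fun t => (rhoK c t / rhoKbar c t) * x t) s) r = 0) ↔
      (∃ A B C : ℂ, ∀ r > (0 : ℝ),
        x r = A * (rhoK c r / rhoKbar c r) + B * (rhoKbar c r / rhoK c r)
            + C * (rhoK c r + rhoKbar c r))) ∧
    ((∀ r > (0 : ℝ),
        (rhoK c r) ^ 2 *
          deriv (fun s =>
            (rhoKbar c s / (rhoK c s) ^ 3) *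
              deriv (fun t => (rhoK c t / rhoKbar c t) * x t) s) r = 0) →
      (x =O[atTop] fun r : ℝ => (r ^ 2)⁻¹) →
      ∀ r > (0 : ℝ), x r = 0) := by
  refine ⟨(transport_eq_zero_iff hx).trans exists_three_term_iff.symm, fun h hO => ?_⟩
  obtain ⟨B, C, hBC⟩ := (transport_eq_zero_iff hx).1 h
  exact eq_zero_of_isBigO_inv_sq hBC hO

/-- kernel of the homogeneous GHZ transport operator for x_{m m̄},
and vanishing under O(r⁻²) decay. -/
theorem stmt2 (c : ℝ) (hc : c ≠ 0) (x : ℝ → ℂ)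
    (hx : ContDiffOn ℝ 2 x (Set.Ioi 0)) :
    ((∀ r > (0 : ℝ),
        (rhoK c r) ^ 2 *
          deriv (fun s =>
            (rhoKbar c s / (rhoK c s) ^ 3) *
              deriv (fun t => (rhoK c t / rhoKbar c t) * x t) s) r = 0) ↔
      (∃ A B C : ℂ, ∀ r > (0 : ℝ),
        x r = A * (rhoK c r / rhoKbar c r) + B * (rhoKbar c r / rhoK c r)
            + C * (rhoK c r + rhoKbar c r))) ∧
    ((∀ r > (0 : ℝ),
        (rhoK c r) ^ 2 *
          deriv (fun s =>
            (rhoKbar c s / (rhoK c s) ^ 3) *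
              deriv (fun t => (rhoK c t / rhoKbar c t) * x t) s) r = 0) →
      (x =O[atTop] fun r : ℝ => (r ^ 2)⁻¹) →
      ∀ r > (0 : ℝ), x r = 0) :=
  stmt2_general c x hx
end

section
/- Let a, M, θ ∈ ℝ, c = a cos θ, Σ(r) = r² + c², Δ(r) = r² - 2Mr + a², and ρ(r) = -1/(r - i c), ρ̄ = conj(ρ). Then for all r with Σ(r) ≠ 0: ρ ρ̄ (ρ + ρ̄) · (a² sin²θ / 2) + (M/2)(ρ² + ρ̄²) = (1/2) d/dr [ Δ(r)/Σ(r) ]. -/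
open Complex

/-!
With `Σ = r² + c²` one has `ρ = -(r + i c)/Σ`, so `ρρ̄ = 1/Σ`, `ρ + ρ̄ = -2r/Σ` and
`ρ² + ρ̄² = 2(r² - c²)/Σ²`. Since `a² sin²θ = a² - c²`, both sides of the identity equal
`(M (r² - c²) - r (a² - c²)) / Σ²`, the right-hand side by the quotient rule.
-/

section Kerr

open ComplexConjugate

variable (c r : ℝ)

theorem rhoK_eq : rhoK c r = -((r : ℂ) + c * I) / ((r ^ 2 + c ^ 2 : ℝ) : ℂ) := by
  have hconj : conj ((r : ℂ) - c * I) = r + c * I := by simp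
  have hnormSq : normSq ((r : ℂ) - c * I) = r ^ 2 + c ^ 2 := by
    rw [sub_eq_add_neg, ← neg_mul, ← ofReal_neg, normSq_add_mul_I, neg_sq]
  rw [rhoK, neg_div, one_div, inv_def, hconj, hnormSq, div_eq_mul_inv, neg_mul, ofReal_inv]

theorem rhoKbar_eq : rhoKbar c r = -((r : ℂ) - c * I) / ((r ^ 2 + c ^ 2 : ℝ) : ℂ) := by
  rw [rhoKbar, rhoK_eq]
  simp [map_div₀, sub_eq_add_neg]

theorem rhoK_mul_rhoKbar : rhoK c r * rhoKbar c r = 1 / ((r ^ 2 + c ^ 2 : ℝ) : ℂ) := by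
  rcases eq_or_ne (r ^ 2 + c ^ 2) 0 with hS | hS
  · simp [rhoK_eq, hS]
  · rw [rhoK_eq, rhoKbar_eq]
    have hSC : ((r ^ 2 + c ^ 2 : ℝ) : ℂ) ≠ 0 := ofReal_ne_zero.mpr hS
    field_simp
    push_cast
    linear_combination (-(c : ℂ) ^ 2) * I_sq

theorem rhoK_add_rhoKbar : rhoK c r + rhoKbar c r = -2 * r / ((r ^ 2 + c ^ 2 : ℝ) : ℂ) := by
  rw [rhoK_eq, rhoKbar_eq]
  ring

theorem rhoK_sq_add_rhoKbar_sq :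
    rhoK c r ^ 2 + rhoKbar c r ^ 2 = 2 * (r ^ 2 - c ^ 2) / ((r ^ 2 + c ^ 2 : ℝ) : ℂ) ^ 2 := by
  rw [rhoK_eq, rhoKbar_eq]
  linear_combination (2 * (c : ℂ) ^ 2 / ((r ^ 2 + c ^ 2 : ℝ) : ℂ) ^ 2) * I_sq

theorem deriv_delta_div_sigma (M a : ℝ) (hS : r ^ 2 + c ^ 2 ≠ 0) :
    deriv (fun s : ℝ => (s ^ 2 - 2 * M * s + a ^ 2) / (s ^ 2 + c ^ 2)) r =
      2 * (M * (r ^ 2 - c ^ 2) - r * (a ^ 2 - c ^ 2)) / (r ^ 2 + c ^ 2) ^ 2 := by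
  have hnum : HasDerivAt (fun s : ℝ => s ^ 2 - 2 * M * s + a ^ 2) (2 * r - 2 * M) r := by
    simpa using (((hasDerivAt_pow 2 r).sub ((hasDerivAt_id r).const_mul (2 * M))).add_const
      (a ^ 2))
  have hden : HasDerivAt (fun s : ℝ => s ^ 2 + c ^ 2) (2 * r) r := by
    simpa using (hasDerivAt_pow 2 r).add_const (c ^ 2)
  refine (hnum.div hden hS).deriv.trans ?_
  ring

end Kerr

/-- the GHP commutator coefficient identity on Kerr. -/
theorem stmt11 (a M θ : ℝ) (r : ℝ)
    (hSig : r ^ 2 + (a * Real.cos θ) ^ 2 ≠ 0) :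
    rhoK (a * Real.cos θ) r * rhoKbar (a * Real.cos θ) r *
        (rhoK (a * Real.cos θ) r + rhoKbar (a * Real.cos θ) r) *
        ((a ^ 2 * Real.sin θ ^ 2 / 2 : ℝ) : ℂ) +
      ((M : ℂ) / 2) * ((rhoK (a * Real.cos θ) r) ^ 2 + (rhoKbar (a * Real.cos θ) r) ^ 2) =
      ((1 / 2 * deriv (fun s : ℝ =>
          (s ^ 2 - 2 * M * s + a ^ 2) / (s ^ 2 + (a * Real.cos θ) ^ 2)) r : ℝ) : ℂ) := by
  set c := a * Real.cos θ with hc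
  have hsin : a ^ 2 * Real.sin θ ^ 2 = a ^ 2 - c ^ 2 := by
    rw [Real.sin_sq, hc]; ring
  rw [rhoK_mul_rhoKbar, rhoK_add_rhoKbar, rhoK_sq_add_rhoKbar_sq,
    deriv_delta_div_sigma c r M a hSig, hsin]
  have hS : ((r : ℂ) ^ 2 + (c : ℂ) ^ 2) ≠ 0 := by exact_mod_cast hSig
  push_cast
  field_simp
  ring
end

section
/- Let a, M ∈ ℝ with M > 0 and a ≠ 0, and let R₀ > 0 be such that s⁴ + a² s² + 2 M a² s > 0 for all s ≥ R₀. Then as r → ∞, ∫_r^∞ (s⁴ + a² s² + 2 M a² s)^{-1/2} ds = 1/r - a²/(6 r³) + O(r^{-4}). -/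
open Filter Asymptotics MeasureTheory

open Set in

lemma inv_pow_eq_rpow {x : ℝ} (hx : 0 < x) (n : ℕ) : (x^n)⁻¹ = x ^ (-(n:ℝ)) := by
  rw [Real.rpow_neg hx.le, Real.rpow_natCast]

lemma integrableOn_inv_pow {r : ℝ} (hr : 0 < r) {n : ℕ} (hn : 2 ≤ n) :
    IntegrableOn (fun s : ℝ => (s^n)⁻¹) (Set.Ioi r) := by
  have h : (-(n:ℝ)) < -1 := by
    have : (2:ℝ) ≤ (n:ℝ) := by exact_mod_cast hn
    linarith
  exact (integrableOn_Ioi_rpow_of_lt h hr).congr_fun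
    (fun x hx => (inv_pow_eq_rpow (hr.trans hx) n).symm) measurableSet_Ioi

lemma integral_inv_pow {r : ℝ} (hr : 0 < r) {n : ℕ} (hn : 2 ≤ n) :
    ∫ s in Set.Ioi r, (s^n)⁻¹ = (r^(n-1))⁻¹ / ((n:ℝ)-1) := by
  have h : (-(n:ℝ)) < -1 := by
    have : (2:ℝ) ≤ (n:ℝ) := by exact_mod_cast hn
    linarith
  rw [setIntegral_congr_fun measurableSet_Ioi
    (fun x hx => inv_pow_eq_rpow (hr.trans hx) n),
    integral_Ioi_rpow_of_lt h hr]
  have h1 : (1:ℕ) ≤ n := by omega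
  have hcast : ((n - 1 : ℕ) : ℝ) = (n:ℝ) - 1 := by
    push_cast [Nat.cast_sub h1]; ring
  rw [show (-(n:ℝ) + 1) = -(((n-1:ℕ)):ℝ) by rw [hcast]; ring,
    ← inv_pow_eq_rpow hr (n-1)]
  rw [hcast]
  have : (n:ℝ) - 1 ≠ 0 := by
    have : (2:ℝ) ≤ (n:ℝ) := by exact_mod_cast hn
    linarith
  have h2 : (2:ℝ) ≤ (n:ℝ) := by exact_mod_cast hn
  have hne : r ^ (n-1) * (1 - (n:ℝ)) ≠ 0 :=
    mul_ne_zero (pow_ne_zero _ hr.ne') (by linarith)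
  field_simp

lemma sqrt_inv_bounds {u : ℝ} (hu : 0 ≤ u) :
    1 - u/2 ≤ (Real.sqrt (1+u))⁻¹ ∧ (Real.sqrt (1+u))⁻¹ ≤ 1 - u/2 + 3/8*u^2 := by
  have h1 : (0:ℝ) < 1 + u := by linarith
  rw [← Real.sqrt_inv]
  constructor
  · rcases le_or_gt (1 - u/2) 0 with h | h
    · exact h.trans (Real.sqrt_nonneg _)
    · rw [Real.le_sqrt h.le (by positivity)]
      rw [← one_div, le_div_iff₀ h1]
      nlinarith [sq_nonneg u, sq_nonneg (u*u)]
  · rw [Real.sqrt_le_iff]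
    refine ⟨by nlinarith, ?_⟩
    rw [inv_le_iff_one_le_mul₀ h1]
    nlinarith [sq_nonneg u, sq_nonneg (u*u), sq_nonneg (u - 5/6), mul_nonneg (mul_nonneg hu hu) hu]

lemma pointwise_bound (a M : ℝ) (hM : 0 < M) {s : ℝ} (hs : 1 ≤ s) :
    |(Real.sqrt (s ^ 4 + a ^ 2 * s ^ 2 + 2 * M * a ^ 2 * s))⁻¹ - ((s^2)⁻¹ - a^2/2 * (s^4)⁻¹)|
      ≤ (M*a^2 + 3/8*(a^2+2*M*a^2)^2) * (s^5)⁻¹ := by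
  have hs0 : (0:ℝ) < s := by linarith
  have hsne : s ≠ 0 := ne_of_gt hs0
  set u : ℝ := a^2*(s^2)⁻¹ + 2*M*a^2*(s^3)⁻¹ with hudef
  clear_value u
  have hu : 0 ≤ u := by rw [hudef]; positivity
  have hQ : s ^ 4 + a ^ 2 * s ^ 2 + 2 * M * a ^ 2 * s = s^4*(1+u) := by
    rw [hudef]; field_simp; ring
  have hs4 : Real.sqrt (s^4) = s^2 := by
    rw [show s^4 = (s^2)^2 by ring, Real.sqrt_sq (by positivity)]
  have hsf : (Real.sqrt (s ^ 4 + a ^ 2 * s ^ 2 + 2 * M * a ^ 2 * s))⁻¹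
      = (s^2)⁻¹ * (Real.sqrt (1+u))⁻¹ := by
    rw [hQ, Real.sqrt_mul (by positivity), hs4, mul_inv]
  obtain ⟨hB1, hB2⟩ := sqrt_inv_bounds hu
  have hids : (s^2)⁻¹ * (u/2) = a^2/2*(s^4)⁻¹ + M*a^2*(s^5)⁻¹ := by
    rw [hudef]; field_simp
  have hinv2 : (0:ℝ) ≤ (s^2)⁻¹ := by positivity
  have hinv5 : (0:ℝ) ≤ (s^5)⁻¹ := by positivity
  have hf_lb : (s^2)⁻¹ * (1 - u/2) ≤ (s^2)⁻¹ * (Real.sqrt (1+u))⁻¹ :=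
    mul_le_mul_of_nonneg_left hB1 hinv2
  have hf_ub : (s^2)⁻¹ * (Real.sqrt (1+u))⁻¹ ≤ (s^2)⁻¹ * (1 - u/2 + 3/8*u^2) :=
    mul_le_mul_of_nonneg_left hB2 hinv2
  have h32 : (s^3)⁻¹ ≤ (s^2)⁻¹ := by
    apply inv_anti₀ (by positivity)
    nlinarith
  have hul : u ≤ (a^2+2*M*a^2)*(s^2)⁻¹ := by
    have h := mul_le_mul_of_nonneg_left h32 (by positivity : (0:ℝ) ≤ 2*M*a^2)
    rw [hudef]; nlinarith [h]
  have hKnn : (0:ℝ) ≤ (a^2+2*M*a^2)*(s^2)⁻¹ := by positivity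
  have hu2 : (s^2)⁻¹ * u^2 ≤ (a^2+2*M*a^2)^2 * (s^5)⁻¹ := by
    have h1 : u^2 ≤ ((a^2+2*M*a^2)*(s^2)⁻¹)^2 := sq_le_sq' (by linarith) hul
    have e : ((s^2)⁻¹ : ℝ)^3 = (s^6)⁻¹ := by
      rw [inv_pow]
      norm_num [← pow_mul]
    have h2 : (s^2)⁻¹ * ((a^2+2*M*a^2)*(s^2)⁻¹)^2 = (a^2+2*M*a^2)^2 * (s^6)⁻¹ := by
      calc (s^2)⁻¹ * ((a^2+2*M*a^2)*(s^2)⁻¹)^2 = (a^2+2*M*a^2)^2 * ((s^2)⁻¹)^3 := by ring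
        _ = (a^2+2*M*a^2)^2 * (s^6)⁻¹ := by rw [e]
    have h3 : (s^6)⁻¹ ≤ (s^5)⁻¹ := by
      apply inv_anti₀ (by positivity)
      nlinarith [pow_pos hs0 5]
    calc (s^2)⁻¹ * u^2 ≤ (s^2)⁻¹ * ((a^2+2*M*a^2)*(s^2)⁻¹)^2 :=
          mul_le_mul_of_nonneg_left h1 hinv2
      _ = (a^2+2*M*a^2)^2 * (s^6)⁻¹ := h2
      _ ≤ (a^2+2*M*a^2)^2 * (s^5)⁻¹ := mul_le_mul_of_nonneg_left h3 (by positivity)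
  have hMa5 : (0:ℝ) ≤ M*a^2*(s^5)⁻¹ := by positivity
  have hK5 : (0:ℝ) ≤ 3/8*(a^2+2*M*a^2)^2*(s^5)⁻¹ := by positivity
  rw [hsf, abs_le]
  constructor
  · linarith [hf_lb, hids, hK5]
  · linarith [hf_ub, hids, hu2, hMa5]

/-- asymptotic expansion of the Fletcher–Lun integral
∫_r^∞ (s⁴ + a²s² + 2Ma²s)^{-1/2} ds = 1/r - a²/(6r³) + O(r⁻⁴). -/
theorem stmt15 (a M R₀ : ℝ) (hM : 0 < M) (ha : a ≠ 0) (hR₀ : 0 < R₀)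
    (hpos : ∀ s ≥ R₀, 0 < s ^ 4 + a ^ 2 * s ^ 2 + 2 * M * a ^ 2 * s) :
    (fun r : ℝ =>
        (∫ s in Set.Ioi r, (Real.sqrt (s ^ 4 + a ^ 2 * s ^ 2 + 2 * M * a ^ 2 * s))⁻¹)
          - (1 / r - a ^ 2 / (6 * r ^ 3)))
      =O[atTop] fun r : ℝ => r ^ (-4 : ℤ) := by
  set C : ℝ := M*a^2 + 3/8*(a^2+2*M*a^2)^2 with hC
  rw [isBigO_iff]
  refine ⟨C/4, ?_⟩
  filter_upwards [eventually_ge_atTop (1:ℝ)] with r hr1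
  have hr0 : (0:ℝ) < r := lt_of_lt_of_le one_pos hr1
  -- integrability of the power functions
  have I2 := integrableOn_inv_pow hr0 (le_refl 2)
  have I4 := integrableOn_inv_pow hr0 (show 2 ≤ 4 by norm_num)
  have I5 := integrableOn_inv_pow hr0 (show 2 ≤ 5 by norm_num)
  -- integrability of f
  set f : ℝ → ℝ := fun s => (Real.sqrt (s ^ 4 + a ^ 2 * s ^ 2 + 2 * M * a ^ 2 * s))⁻¹ with hf
  have hfmeas : AEStronglyMeasurable f (volume.restrict (Set.Ioi r)) := by
    apply Measurable.aestronglyMeasurable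
    exact (Real.continuous_sqrt.comp (by continuity)).measurable.inv
  have hfbound : ∀ s ∈ Set.Ioi r, ‖f s‖ ≤ ‖(s^2)⁻¹‖ := by
    intro s hs
    have hs0 : (0:ℝ) < s := lt_trans hr0 hs
    have hQge : s^4 ≤ s ^ 4 + a ^ 2 * s ^ 2 + 2 * M * a ^ 2 * s := by
      have h1 : (0:ℝ) ≤ a^2*s^2 := by positivity
      have h2 : (0:ℝ) ≤ 2*M*a^2*s := by positivity
      linarith
    have hs4eq : Real.sqrt (s^4) = s^2 := by
      rw [show s^4 = (s^2)^2 by ring, Real.sqrt_sq (by positivity)]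
    have hsq : s^2 ≤ Real.sqrt (s ^ 4 + a ^ 2 * s ^ 2 + 2 * M * a ^ 2 * s) := by
      calc s^2 = Real.sqrt (s^4) := hs4eq.symm
        _ ≤ Real.sqrt (s ^ 4 + a ^ 2 * s ^ 2 + 2 * M * a ^ 2 * s) := Real.sqrt_le_sqrt hQge
    have h1 : f s ≤ (s^2)⁻¹ := inv_anti₀ (by positivity) hsq
    have h2 : 0 ≤ f s := by rw [hf]; positivity
    rw [Real.norm_eq_abs, Real.norm_eq_abs, abs_of_nonneg h2, abs_of_nonneg (by positivity : (0:ℝ) ≤ (s^2)⁻¹)]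
    exact h1
  have If : IntegrableOn f (Set.Ioi r) := by
    apply Integrable.mono I2 hfmeas
    exact (ae_restrict_iff' measurableSet_Ioi).mpr (ae_of_all _ hfbound)
  -- the comparison function
  set h : ℝ → ℝ := fun s => (s^2)⁻¹ - a^2/2 * (s^4)⁻¹ with hh
  have Ih : IntegrableOn h (Set.Ioi r) := I2.sub (I4.const_mul _)
  -- integral values
  have J2 : ∫ s in Set.Ioi r, (s^2)⁻¹ = r⁻¹ := by
    rw [integral_inv_pow hr0 (le_refl 2)]; norm_num
  have J4 : ∫ s in Set.Ioi r, (s^4)⁻¹ = (r^3)⁻¹/3 := by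
    rw [integral_inv_pow hr0 (show 2 ≤ 4 by norm_num)]; norm_num
  have J5 : ∫ s in Set.Ioi r, (s^5)⁻¹ = (r^4)⁻¹/4 := by
    rw [integral_inv_pow hr0 (show 2 ≤ 5 by norm_num)]; norm_num
  have Jh : ∫ s in Set.Ioi r, h s = 1 / r - a ^ 2 / (6 * r ^ 3) := by
    rw [hh]
    rw [integral_sub I2 (I4.const_mul _), integral_const_mul, J2, J4]
    field_simp
    ring
  -- rewrite difference as single integral
  have key : (∫ s in Set.Ioi r, f s) - (1 / r - a ^ 2 / (6 * r ^ 3))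
      = ∫ s in Set.Ioi r, (f s - h s) := by
    rw [integral_sub If Ih, Jh]
  -- bound the integral
  have hbound : ∀ s ∈ Set.Ioi r, ‖f s - h s‖ ≤ C * (s^5)⁻¹ := by
    intro s hs
    have hs1 : 1 ≤ s := le_of_lt (lt_of_le_of_lt hr1 hs)
    rw [Real.norm_eq_abs, hf, hh, hC]
    exact pointwise_bound a M hM hs1
  have hnorm : ‖∫ s in Set.Ioi r, (f s - h s)‖ ≤ C * ((r^4)⁻¹/4) := by
    calc ‖∫ s in Set.Ioi r, (f s - h s)‖ ≤ ∫ s in Set.Ioi r, C * (s^5)⁻¹ := by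
          apply norm_integral_le_of_norm_le (I5.const_mul C)
          exact (ae_restrict_iff' measurableSet_Ioi).mpr (ae_of_all _ hbound)
      _ = C * ((r^4)⁻¹/4) := by rw [integral_const_mul, J5]
  have hnormg : ‖r ^ (-4:ℤ)‖ = (r^4)⁻¹ := by
    rw [Real.norm_eq_abs, zpow_neg, abs_inv, show ((4:ℤ):ℤ) = ((4:ℕ):ℤ) by norm_num,
      zpow_natCast, abs_of_nonneg (by positivity : (0:ℝ) ≤ r^4)]
  rw [key] at *
  calc ‖∫ s in Set.Ioi r, (f s - h s)‖ ≤ C * ((r^4)⁻¹/4) := hnorm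
    _ = C/4 * (r^4)⁻¹ := by ring
    _ = C/4 * ‖r ^ (-4:ℤ)‖ := by rw [hnormg]
end
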